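/- Let b, c be even integers with 0 ≤ c < b, and let D be the (b-c)×(b-c) matrix over ℚ with rows and columns indexed by c ≤ i,j < b, whose (i,j) entry equals C(c - b/2 - 1/2, 2c-1-j) if i = c, and C(c - b/2 + 1/2, i-j+c) if c < i < b. Then the columns of D satisfy the explicit linear relation: for every i with c ≤ i ≤ b-1, ∑_{j=c}^{b-1} (-1)^j · (1-b+c)_{j-c} · (1/2 - b/2)_{j-c} / ( (j-c)! · (1-b)_{j-c} ) · D(i,j) = 0. -/

import Mathlib

/-!
With `β = (1 - b)/2` and the sign `(-1)^c` removed, the column weights are the coefficients `λ_j`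
of the terminating series `F(t) = ₂F₁(c + 1 - b, β; 1 - b; -t)`, and row `m` pairs them with
the coefficients of `(1 + t)^x`, so the row sums are coefficients of `(1 + t)^x F(t)`.
For `x = c + β` Euler's transformation identifies this product, in degrees `< b`, with the
polynomial `₂F₁(-c, 1 - b - β; 1 - b; -t)`; coefficientwise, both sides satisfy the same two-term
recurrence in `m`, whose leading coefficient `(m + 1)(m + 1 - b)` is nonzero for `m + 1 < b`.
The rows `c < m < b` therefore vanish because `C(c, m) = 0`. Row `c` is the coefficient of
degree `c - 1` for `x = c + β - 1`, i.e. after dividing by `1 + t`, so up to sign it is the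
alternating partial sum `∑_{k < c} (-1)^k C(c, k) (β)_k / (2β)_k`. By Chu–Vandermonde the full
sum over `k ≤ c` is `(2β - β)_c / (2β)_c`, which is exactly the term `k = c` since `c` is even.
-/

open Finset

/-- Generalized binomial coefficient `C(x,k)`. -/
def gbinom (x : ℚ) (k : ℤ) : ℚ :=
  if 0 ≤ k then (∏ m ∈ Finset.range k.toNat, (x - m)) / (k.toNat.factorial : ℚ) else 0

/-- Shifted factorial `(a)_k` with integer index. -/
def poch (a : ℚ) (k : ℤ) : ℚ :=
  if 0 ≤ k then ∏ m ∈ Finset.range k.toNat, (a + m)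
  else 1 / ∏ m ∈ Finset.range (-k).toNat, (a - (m + 1))

/-- The matrix `M(x;b,c)`. -/
def Mmat (x : ℚ) (b c : ℕ) : Matrix (Fin (b + c)) (Fin (b + c)) ℚ := fun i j =>
  if (i : ℕ) < c then
    (if (j : ℕ) < b then gbinom (x + (j : ℕ)) ((i : ℕ) : ℤ)
     else gbinom (2 * x + (j : ℕ)) ((i : ℕ) : ℤ))
  else if (i : ℕ) < b then
    (if (j : ℕ) < c then 0
     else if (j : ℕ) < b then gbinom (x + (j : ℕ)) ((i : ℕ) : ℤ)
     else gbinom (2 * x + (j : ℕ)) ((i : ℕ) : ℤ))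
  else
    (if (j : ℕ) < c then 2 * gbinom (x + (j : ℕ)) (((i : ℕ) : ℤ) - (b : ℤ))
     else if (j : ℕ) < b then gbinom (x + (j : ℕ)) (((i : ℕ) : ℤ) - (b : ℤ))
     else 0)

/-- `Δ(x;b,c)`. -/
def Δdet (x : ℚ) (b c : ℕ) : ℚ := (Mmat x b c).det

/-- The matrix `M'(x;b,c)`; column index `j` of the paper is `c + j'`. -/
def M'mat (x : ℚ) (b c : ℕ) : Matrix (Fin b) (Fin b) ℚ := fun i j =>
  if c + (j : ℕ) < b then
    gbinom (x + (c : ℕ)) (((i : ℕ) : ℤ) - ((c : ℤ) + (j : ℕ)) + (c : ℤ))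
  else if (i : ℕ) < c then
    2 * gbinom (2 * x + (b : ℕ)) (((i : ℕ) : ℤ) - ((c : ℤ) + (j : ℕ)) + (b : ℤ))
  else
    gbinom (2 * x + (b : ℕ)) (((i : ℕ) : ℤ) - ((c : ℤ) + (j : ℕ)) + (b : ℤ))

/-- `Δ'(x;b,c)`. -/
def Δ'det (x : ℚ) (b c : ℕ) : ℚ := (M'mat x b c).det

open Polynomial

lemma gbinom_of_neg (x : ℚ) {k : ℤ} (hk : k < 0) : gbinom x k = 0 := by
  rw [gbinom, if_neg (not_le.mpr hk)]

lemma gbinom_zero (x : ℚ) : gbinom x 0 = 1 := by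
  simp [gbinom]

lemma gbinom_natCast (x : ℚ) (n : ℕ) : gbinom x n = Ring.choose x n := by
  rw [Ring.choose_eq_smul, smul_eq_mul, descPochhammer_smeval_eq_ascPochhammer,
    ascPochhammer_smeval_eq_eval, ← descPochhammer_eval_eq_ascPochhammer,
    descPochhammer_eval_eq_prod_range, gbinom]
  simp [div_eq_inv_mul]

lemma gbinom_eq_gbinom_sub_one_add (x : ℚ) (k : ℤ) :
    gbinom x k = gbinom (x - 1) k + gbinom (x - 1) (k - 1) := by
  rcases lt_or_ge k 0 with hk | hk
  · simp [gbinom_of_neg, hk, (by omega : k - 1 < 0)]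
  lift k to ℕ using hk
  cases k with
  | zero => simp [gbinom_zero, gbinom_of_neg]
  | succ n =>
    have := Ring.choose_succ_succ (x - 1) n
    rw [sub_add_cancel] at this
    rw [Nat.cast_succ, add_sub_cancel_right, ← Nat.cast_succ, gbinom_natCast, gbinom_natCast,
      gbinom_natCast, this, add_comm]

lemma intCast_mul_gbinom (x : ℚ) (k : ℤ) :
    (k : ℚ) * gbinom x k = (x - k + 1) * gbinom x (k - 1) := by
  rcases lt_or_ge k 0 with hk | hk
  · simp [gbinom_of_neg, hk, (by omega : k - 1 < 0)]
  lift k to ℕ using hk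
  cases k with
  | zero => simp [gbinom_of_neg]
  | succ n =>
    have := Ring.choose_smul_choose x (Nat.le_succ n)
    rw [Nat.choose_succ_self_right, Nat.succ_sub (le_refl n), Nat.sub_self,
      Ring.choose_one_right, nsmul_eq_mul] at this
    rw [Nat.cast_succ, add_sub_cancel_right, gbinom_natCast, ← Nat.cast_succ, gbinom_natCast]
    push_cast at this ⊢
    linear_combination this

lemma poch_natCast (a : ℚ) (n : ℕ) : poch a n = (ascPochhammer ℚ n).eval a := by
  rw [poch, if_pos n.cast_nonneg, Int.toNat_natCast]
  induction n with
  | zero => simp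
  | succ n ih => rw [prod_range_succ, ih, ascPochhammer_succ_eval]

lemma ascPochhammer_eval_sub_eq_sum {R : Type*} [CommRing R] (β γ : R) (N : ℕ) :
    (ascPochhammer R N).eval (γ - β) = ∑ k ∈ range (N + 1),
      (-1) ^ k * N.choose k * (ascPochhammer R k).eval β *
        (ascPochhammer R (N - k)).eval (γ + k) := by
  have desc_eq (r : R) (n : ℕ) :
      (descPochhammer ℤ n).smeval r = (ascPochhammer R n).eval (r - n + 1) := by
    rw [descPochhammer_smeval_eq_ascPochhammer, ascPochhammer_smeval_eq_eval]
  -- falling factorials at `-β` are signed rising factorials at `β`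
  have := Ring.descPochhammer_smeval_add (r := -β) (s := γ + N - 1) N (Commute.all _ _)
  rw [Nat.sum_antidiagonal_eq_sum_range_succ_mk] at this
  simp only [desc_eq] at this
  convert this using 1
  · congr 1; ring
  refine sum_congr rfl fun k hk => ?_
  have hkN : k ≤ N := Nat.lt_succ_iff.mp (mem_range.mp hk)
  rw [Nat.cast_sub hkN, ← neg_neg (-β - k + 1), ascPochhammer_eval_neg_eq_descPochhammer,
    descPochhammer_eval_eq_ascPochhammer]
  ring_nf

lemma ascPochhammer_eval_one_sub_ne_zero {b m : ℕ} (h : m < b) :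
    (ascPochhammer ℚ m).eval (1 - (b : ℚ)) ≠ 0 := by
  rw [Ne, ascPochhammer_eval_eq_zero_iff]
  rintro ⟨k, hk, hkb⟩
  have : (k : ℚ) + 1 = b := by linarith
  norm_cast at this
  omega

lemma natCast_choose_succ_mul (c m : ℕ) :
    (c.choose (m + 1) : ℚ) * (m + 1) = c.choose m * (c - m) := by
  have := intCast_mul_gbinom (c : ℚ) (m + 1 : ℕ)
  rw [Nat.cast_succ, add_sub_cancel_right, ← Nat.cast_succ, gbinom_natCast, gbinom_natCast,
    Ring.choose_natCast, Ring.choose_natCast] at this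
  push_cast at this
  linear_combination this

section TruncatedEuler

variable (b c : ℕ) (β : ℚ)

noncomputable def eulerCoeff (j : ℕ) : ℚ :=
  (-1) ^ j * (ascPochhammer ℚ j).eval (1 - (b : ℚ) + c) * (ascPochhammer ℚ j).eval β /
    (j.factorial * (ascPochhammer ℚ j).eval (1 - (b : ℚ)))

noncomputable def eulerSum (x : ℚ) (m : ℤ) : ℚ :=
  ∑ j ∈ range (b - c), eulerCoeff b c β j * gbinom x (m - j)

noncomputable def eulerTarget (m : ℕ) : ℚ :=
  c.choose m * (ascPochhammer ℚ m).eval (1 - (b : ℚ) - β) /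
    (ascPochhammer ℚ m).eval (1 - (b : ℚ))

lemma eulerCoeff_zero : eulerCoeff b c β 0 = 1 := by
  simp [eulerCoeff]

lemma eulerCoeff_sub_eq_zero (hcb : c < b) : eulerCoeff b c β (b - c) = 0 := by
  have : (ascPochhammer ℚ (b - c)).eval (1 - (b : ℚ) + c) = 0 := by
    rw [ascPochhammer_eval_eq_zero_iff]
    refine ⟨b - c - 1, by omega, ?_⟩
    rw [Nat.cast_sub (by omega), Nat.cast_sub hcb.le]
    ring
  rw [eulerCoeff, this]
  ring

lemma eulerCoeff_succ_mul {j : ℕ} (hj : j < b - c) :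
    eulerCoeff b c β (j + 1) * ((j + 1) * (1 - b + j)) =
      -eulerCoeff b c β j * (1 - b + c + j) * (β + j) := by
  rcases lt_or_ge (j + 1) b with hjb | hjb
  · have hγ : (ascPochhammer ℚ j).eval (1 - (b : ℚ)) ≠ 0 :=
      ascPochhammer_eval_one_sub_ne_zero (by omega)
    have hγj : (1 : ℚ) - b + j ≠ 0 := by
      have : (j : ℚ) + 1 < b := by exact_mod_cast hjb
      intro h; linarith
    rw [eulerCoeff, eulerCoeff, ascPochhammer_succ_eval, ascPochhammer_succ_eval,
      ascPochhammer_succ_eval, Nat.factorial_succ]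
    push_cast
    field_simp
    ring
  · have hj : (j : ℚ) = b - 1 := by
      rw [← Nat.cast_pred (by omega)]
      exact_mod_cast (by omega : j = b - 1)
    have hc : (c : ℚ) = 0 := by exact_mod_cast (by omega : c = 0)
    rw [hj, hc]
    ring

lemma eulerSum_of_neg (x : ℚ) {m : ℤ} (hm : m < 0) : eulerSum b c β x m = 0 :=
  sum_eq_zero fun j _ => by rw [gbinom_of_neg x (by omega), mul_zero]

lemma eulerSum_zero (hcb : c < b) (x : ℚ) : eulerSum b c β x 0 = 1 := by
  rw [eulerSum, sum_eq_single_of_mem 0 (mem_range.mpr (by omega))]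
  · simp [eulerCoeff_zero, gbinom_zero]
  · intro j _ hj
    rw [gbinom_of_neg x (by omega), mul_zero]

lemma eulerSum_eq_eulerSum_sub_one_add (x : ℚ) (m : ℤ) :
    eulerSum b c β x m = eulerSum b c β (x - 1) m + eulerSum b c β (x - 1) (m - 1) := by
  simp only [eulerSum, ← sum_add_distrib, ← mul_add]
  refine sum_congr rfl fun j _ => ?_
  rw [gbinom_eq_gbinom_sub_one_add, sub_right_comm]

lemma eulerSum_recurrence (hcb : c < b) (m : ℕ) :
    ((m : ℚ) + 1) * (m + 1 - b) * eulerSum b c β (c + β) (m + 1) +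
      ((m : ℚ) - c) * (m + 1 - b - β) * eulerSum b c β (c + β) m = 0 := by
  -- `f 0 = 0` and `f (b - c) = 0`, so the sum of the recurrence telescopes to zero
  set f : ℕ → ℚ := fun j => j * (b - j) * eulerCoeff b c β j * gbinom (c + β) (m + 1 - j)
  have telescope : ∀ j ∈ range (b - c),
      ((m : ℚ) + 1) * (m + 1 - b) * (eulerCoeff b c β j * gbinom (c + β) (m + 1 - j)) +
        ((m : ℚ) - c) * (m + 1 - b - β) * (eulerCoeff b c β j * gbinom (c + β) (m - j)) =
        f (j + 1) - f j := by
    intro j hj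
    have habs := intCast_mul_gbinom (c + β) (m + 1 - j)
    have hstep := eulerCoeff_succ_mul b c β (mem_range.mp hj)
    simp only [f, Nat.cast_succ, show (m : ℤ) + 1 - j - 1 = m - j by ring,
      show (m : ℤ) + 1 - (j + 1) = m - j by ring] at habs ⊢
    push_cast at habs ⊢
    linear_combination (eulerCoeff b c β j * ((m : ℚ) + 1 + j - b)) * habs +
      gbinom (c + β) (m - j) * hstep
  rw [eulerSum, eulerSum, mul_sum, mul_sum, ← sum_add_distrib, sum_congr rfl telescope,
    sum_range_sub]
  simp [f, eulerCoeff_sub_eq_zero b c β hcb]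

lemma eulerTarget_zero : eulerTarget b c β 0 = 1 := by
  simp [eulerTarget]

lemma eulerTarget_recurrence {m : ℕ} (hm : m + 1 < b) :
    ((m : ℚ) + 1) * (m + 1 - b) * eulerTarget b c β (m + 1) +
      ((m : ℚ) - c) * (m + 1 - b - β) * eulerTarget b c β m = 0 := by
  have hγ := ascPochhammer_eval_one_sub_ne_zero (by omega : m < b)
  have hγm : (1 : ℚ) - b + m ≠ 0 := by
    have : (m : ℚ) + 1 < b := by exact_mod_cast hm
    intro h; linarith
  have hchoose := natCast_choose_succ_mul c m
  rw [eulerTarget, eulerTarget, ascPochhammer_succ_eval, ascPochhammer_succ_eval]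
  field_simp
  linear_combination
    (ascPochhammer ℚ m).eval (1 - (b : ℚ) - β) * (m + 1 - b) * (1 - b - β + m) * hchoose

lemma eulerSum_eq_eulerTarget (hcb : c < b) {m : ℕ} (hm : m < b) :
    eulerSum b c β (c + β) m = eulerTarget b c β m := by
  induction m with
  | zero => rw [Nat.cast_zero, eulerSum_zero b c β hcb, eulerTarget_zero]
  | succ m ih =>
    have hS := eulerSum_recurrence b c β hcb m
    have hE := eulerTarget_recurrence b c β hm
    rw [ih (by omega)] at hS
    have hne : ((m : ℚ) + 1) * (m + 1 - b) ≠ 0 := by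
      have : (m : ℚ) + 1 < b := by exact_mod_cast hm
      exact mul_ne_zero (by positivity) (by linarith)
    refine mul_left_cancel₀ hne ?_
    push_cast
    linear_combination hS - hE

lemma sum_range_neg_one_pow_mul_eulerSum (x : ℚ) (n : ℕ) :
    ∑ k ∈ range n, (-1) ^ k * eulerSum b c β x k =
      (-1) ^ (n + 1) * eulerSum b c β (x - 1) (n - 1) := by
  induction n with
  | zero => simp [eulerSum_of_neg]
  | succ n ih =>
    rw [sum_range_succ, ih, eulerSum_eq_eulerSum_sub_one_add b c β x n]
    push_cast
    ring_nf

end TruncatedEuler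

lemma sum_range_neg_one_pow_mul_eulerTarget {b c : ℕ} (hc : Even c) (hcb : c < b) :
    ∑ k ∈ range c, (-1) ^ k * eulerTarget b c (1 / 2 - b / 2) k = 0 := by
  set δ : ℚ := 1 / 2 - b / 2
  have hγ := ascPochhammer_eval_one_sub_ne_zero hcb
  have hsplit : ∀ k ∈ range c, (ascPochhammer ℚ c).eval (1 - (b : ℚ)) =
      (ascPochhammer ℚ k).eval (1 - (b : ℚ)) *
        (ascPochhammer ℚ (c - k)).eval (1 - (b : ℚ) + k) := by
    intro k hk
    have := congrArg (eval (1 - (b : ℚ))) (ascPochhammer_mul ℚ k (c - k))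
    rw [Nat.add_sub_cancel' (mem_range.mp hk).le] at this
    simpa using this.symm
  have hvdm := ascPochhammer_eval_sub_eq_sum δ (1 - b) c
  rw [sum_range_succ, Nat.sub_self, Nat.choose_self, hc.neg_one_pow,
    show (1 : ℚ) - b - δ = δ by ring] at hvdm
  have hterm : ∀ k ∈ range c,
      (-1) ^ k * eulerTarget b c δ k * (ascPochhammer ℚ c).eval (1 - (b : ℚ)) =
      (-1) ^ k * c.choose k * (ascPochhammer ℚ k).eval δ *
        (ascPochhammer ℚ (c - k)).eval (1 - (b : ℚ) + k) := by
    intro k hk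
    have hγk := ascPochhammer_eval_one_sub_ne_zero (hcb.trans' (mem_range.mp hk))
    rw [eulerTarget, hsplit k hk, show (1 : ℚ) - b - δ = δ by ring]
    field_simp
  have hsum : (∑ k ∈ range c, (-1) ^ k * eulerTarget b c δ k) *
      (ascPochhammer ℚ c).eval (1 - (b : ℚ)) = 0 := by
    rw [sum_mul, sum_congr rfl hterm]
    simp only [ascPochhammer_zero, eval_one, Nat.cast_one, one_mul, mul_one] at hvdm
    linarith
  exact (mul_eq_zero.mp hsum).resolve_right hγ

theorem lemma4_column_relation_general (b c : ℕ) (hc : Even c) (hcb : c < b) :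
    ∀ i : Fin (b - c),
      ∑ j : Fin (b - c),
        ((-1 : ℚ) ^ (c + (j : ℕ)) * poch (1 - (b : ℚ) + c) ((j : ℕ) : ℤ) *
              poch (1 / 2 - (b : ℚ) / 2) ((j : ℕ) : ℤ) /
            ((Nat.factorial (j : ℕ) : ℚ) * poch (1 - (b : ℚ)) ((j : ℕ) : ℤ))) *
          (if (i : ℕ) = 0 then
            gbinom ((c : ℚ) - (b : ℚ) / 2 - 1 / 2)
              (2 * (c : ℤ) - 1 - ((c : ℤ) + (j : ℕ)))
          else
            gbinom ((c : ℚ) - (b : ℚ) / 2 + 1 / 2)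
              (((c : ℤ) + (i : ℕ)) - ((c : ℤ) + (j : ℕ)) + (c : ℤ))) = 0 := by
  intro i
  set β : ℚ := 1 / 2 - b / 2
  have hcoeff (j : ℕ) :
      (-1 : ℚ) ^ (c + j) * poch (1 - (b : ℚ) + c) (j : ℤ) * poch β (j : ℤ) /
        ((Nat.factorial j : ℚ) * poch (1 - (b : ℚ)) (j : ℤ)) = eulerCoeff b c β j := by
    rw [poch_natCast, poch_natCast, poch_natCast, eulerCoeff, pow_add, hc.neg_one_pow,
      one_mul]
  have hsum (x : ℚ) (m : ℤ) :
      ∑ j : Fin (b - c), ((-1 : ℚ) ^ (c + (j : ℕ)) * poch (1 - (b : ℚ) + c) ((j : ℕ) : ℤ) *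
          poch β ((j : ℕ) : ℤ) /
            ((Nat.factorial (j : ℕ) : ℚ) * poch (1 - (b : ℚ)) ((j : ℕ) : ℤ))) *
        gbinom x (m - (j : ℕ)) = eulerSum b c β x m := by
    rw [eulerSum, ← Fin.sum_univ_eq_sum_range (fun j => eulerCoeff b c β j * gbinom x (m - j))]
    simp only [hcoeff]
  split_ifs with hi
  · simp only [show (c : ℚ) - b / 2 - 1 / 2 = c + β - 1 by ring,
      show ∀ j : ℤ, 2 * (c : ℤ) - 1 - (c + j) = (c - 1 : ℤ) - j from fun j => by ring, hsum]
    have halt := sum_range_neg_one_pow_mul_eulerSum b c β (c + β) c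
    rw [sum_congr rfl fun k hk => by
        rw [eulerSum_eq_eulerTarget b c β hcb (hcb.trans' (mem_range.mp hk))],
      sum_range_neg_one_pow_mul_eulerTarget hc hcb] at halt
    exact (mul_eq_zero.mp halt.symm).resolve_left (pow_ne_zero _ (by norm_num))
  · simp only [show (c : ℚ) - b / 2 + 1 / 2 = c + β by ring,
      show ∀ j : ℤ, (c : ℤ) + i - (c + j) + c = (c + i : ℕ) - j from
        fun j => by push_cast; ring,
      hsum]
    rw [eulerSum_eq_eulerTarget b c β hcb (by omega), eulerTarget,
      Nat.choose_eq_zero_of_lt (by omega), Nat.cast_zero, zero_mul, zero_div]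

/-- Equation (3.77): the explicit vanishing linear combination of the columns of
the matrix `D` of Lemma 4.  Rows and columns are indexed by `c ≤ i,j < b`,
realized as `i = c + i'`, `j = c + j'` with `i', j' : Fin (b-c)`. -/
theorem lemma4_column_relation (b c : ℕ) (hb : Even b) (hc : Even c) (hcb : c < b) :
    ∀ i : Fin (b - c),
      ∑ j : Fin (b - c),
        ((-1 : ℚ) ^ (c + (j : ℕ)) * poch (1 - (b : ℚ) + c) ((j : ℕ) : ℤ) *
              poch (1 / 2 - (b : ℚ) / 2) ((j : ℕ) : ℤ) /
            ((Nat.factorial (j : ℕ) : ℚ) * poch (1 - (b : ℚ)) ((j : ℕ) : ℤ))) *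
          (if (i : ℕ) = 0 then
            gbinom ((c : ℚ) - (b : ℚ) / 2 - 1 / 2)
              (2 * (c : ℤ) - 1 - ((c : ℤ) + (j : ℕ)))
          else
            gbinom ((c : ℚ) - (b : ℚ) / 2 + 1 / 2)
              (((c : ℤ) + (i : ℕ)) - ((c : ℤ) + (j : ℕ)) + (c : ℤ))) = 0 :=
  lemma4_column_relation_general b c hc hcb
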